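/- Graham scan invariant for leftward insertion: let S be a finite planar point set with upper hull vertex sequence v_1, ..., v_k (left to right), and let p be a point strictly left of all of S. Let j be the smallest index such that for all i > j, the points p, v_j, v_i make a right turn (v_i is strictly below line p v_j). Then the upper hull of S ∪ {p} is p, v_j, v_{j+1}, ..., v_k. -/

import Mathlib

open Finset

/-- Signed cross product (orientation) of points `a`, `b`, `c`: positive iff `c` is
strictly above the line through `a` and `b` (when `a.1 < b.1`). -/
def cross (a b c : ℝ × ℝ) : ℝ :=
  (b.1 - a.1) * (c.2 - a.2) - (b.2 - a.2) * (c.1 - a.1)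

/-- `v` is a vertex of the upper convex hull of `T`: it is a point of `T` that is not
strictly below any segment joining two other points of `T`. -/
def UpperVertex (T : Finset (ℝ × ℝ)) (v : ℝ × ℝ) : Prop :=
  v ∈ T ∧ ∀ a ∈ T, ∀ b ∈ T, a.1 < v.1 → v.1 < b.1 → 0 ≤ cross a b v

/-- General position: distinct x-coordinates and no three collinear. -/
def GenPos (T : Finset (ℝ × ℝ)) : Prop :=
  (∀ p ∈ T, ∀ q ∈ T, p ≠ q → p.1 ≠ q.1) ∧
  (∀ p ∈ T, ∀ q ∈ T, ∀ r ∈ T, p ≠ q → q ≠ r → p ≠ r → cross p q r ≠ 0)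

/-- Every point of `S1` is strictly to the left of every point of `S2`. -/
def XSep (S1 S2 : Finset (ℝ × ℝ)) : Prop :=
  ∀ p ∈ S1, ∀ q ∈ S2, p.1 < q.1

/-- `(t1, t2)` is an upper common tangent of the x-separated sets `S1`, `S2`:
all points of `S1 ∪ S2` lie on or below the line through `t1` and `t2`. -/
def UCT (S1 S2 : Finset (ℝ × ℝ)) (t1 t2 : ℝ × ℝ) : Prop :=
  t1 ∈ S1 ∧ t2 ∈ S2 ∧ ∀ x ∈ S1 ∪ S2, cross t1 t2 x ≤ 0

/- Put `v = v_j`. The function `x ↦ cross p v x` is affine with positive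
`y`-coefficient, so over the points of `S` right of `v` it is maximised at an upper vertex of `S`:
a maximiser strictly below a segment `ac` would be beaten by `a` or `c`, or, if `a` is not right
of `v`, by `v` itself (where the function vanishes). Hence all of `S` right of `v_j` lies strictly
below the line `p v_j`, and by chaining right turns the line `p v_i` supports `S` for every `i ≥ j`.
A point `w ≠ p` is an upper vertex of `S ∪ {p}` iff it is an upper vertex of `S` and `p w` supports
the points right of `w`; for `v_i` with `i < j` the minimality of `j` and general position produce
a point of `S` strictly above the line `p v_i`. -/

lemma cross_swap (a b c : ℝ × ℝ) : cross a c b = -cross a b c := by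
  unfold cross; ring

lemma cross_interpolate (p q a b c : ℝ × ℝ) :
    (c.1 - a.1) * cross p q b
      = (c.1 - b.1) * cross p q a + (b.1 - a.1) * cross p q c + (q.1 - p.1) * cross a c b := by
  unfold cross; ring

lemma cross_nonpos_of_right_turns {a b c d : ℝ × ℝ} (hac : a.1 ≤ c.1) (hbc : b.1 < c.1)
    (hcd : c.1 ≤ d.1) (habc : cross a b c ≤ 0) (hbcd : cross b c d ≤ 0) : cross a c d ≤ 0 := by
  have key : (c.1 - b.1) * cross a c d
      = (d.1 - c.1) * cross a b c + (c.1 - a.1) * cross b c d := by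
    unfold cross; ring
  have : (c.1 - b.1) * cross a c d ≤ 0 := by
    rw [key]
    nlinarith [mul_nonpos_of_nonneg_of_nonpos (sub_nonneg.2 hcd) habc,
      mul_nonpos_of_nonneg_of_nonpos (sub_nonneg.2 hac) hbcd]
  exact nonpos_of_mul_nonpos_right this (sub_pos.2 hbc)

lemma cross_neg_of_below_of_above {a c m v : ℝ × ℝ} (hac : a.1 < c.1) (hmc : m.1 ≤ c.1)
    (hvc : v.1 < c.1) (hm : cross a c m < 0) (hv : 0 ≤ cross a c v) : cross v c m < 0 := by
  have key : (c.1 - a.1) * cross v c m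
      = (c.1 - v.1) * cross a c m - (c.1 - m.1) * cross a c v := by
    unfold cross; ring
  have : (c.1 - a.1) * cross v c m < 0 := by
    rw [key]
    nlinarith [mul_neg_of_pos_of_neg (sub_pos.2 hvc) hm,
      mul_nonneg (sub_nonneg.2 hmc) hv]
  exact neg_of_mul_neg_right this (sub_pos.2 hac).le

/-- An affine function increasing in the `y`-direction has no maximum strictly below a chord. -/
lemma cross_lt_or_cross_lt_of_below {p q a c m : ℝ × ℝ} (hpq : p.1 < q.1) (ham : a.1 < m.1)
    (hmc : m.1 < c.1) (hm : cross a c m < 0) :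
    cross p q m < cross p q a ∨ cross p q m < cross p q c := by
  by_contra! h
  have key := cross_interpolate p q a m c
  nlinarith [mul_neg_of_pos_of_neg (sub_pos.2 hpq) hm,
    mul_le_mul_of_nonneg_left h.1 (sub_nonneg.2 hmc.le),
    mul_le_mul_of_nonneg_left h.2 (sub_nonneg.2 ham.le)]

lemma upperVertex_insert_of_forall_lt {S : Finset (ℝ × ℝ)} {p : ℝ × ℝ}
    (hleft : ∀ x ∈ S, p.1 < x.1) : UpperVertex (insert p S) p := by
  refine ⟨mem_insert_self p S, fun a ha _ _ hap _ => ?_⟩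
  rcases mem_insert.1 ha with rfl | haS
  · exact absurd hap (lt_irrefl _)
  · exact absurd (hleft a haS) hap.not_gt

lemma upperVertex_insert_iff {S : Finset (ℝ × ℝ)} {p w : ℝ × ℝ} (hpw : p.1 < w.1) :
    UpperVertex (insert p S) w ↔
      UpperVertex S w ∧ ∀ c ∈ S, w.1 < c.1 → cross p w c ≤ 0 := by
  have hwp : w ≠ p := fun h => (h ▸ hpw).false
  constructor
  · rintro ⟨hw, hup⟩
    refine ⟨⟨(mem_insert.1 hw).resolve_left hwp, fun a ha c hc => hup a (mem_insert_of_mem ha) c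
      (mem_insert_of_mem hc)⟩, fun c hc hwc => ?_⟩
    have := hup p (mem_insert_self p S) c (mem_insert_of_mem hc) hpw hwc
    rw [cross_swap] at this
    linarith
  · rintro ⟨⟨hw, hup⟩, hright⟩
    refine ⟨mem_insert_of_mem hw, fun a ha c hc haw hwc => ?_⟩
    have hcS : c ∈ S := (mem_insert.1 hc).resolve_left fun h => (hpw.trans (h ▸ hwc)).false
    rcases mem_insert.1 ha with rfl | haS
    · rw [cross_swap]
      linarith [hright c hcS hwc]
    · exact hup a haS c hcS haw hwc

lemma cross_neg_of_forall_upperVertex {S : Finset (ℝ × ℝ)} {p v b : ℝ × ℝ}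
    (hinj : Set.InjOn Prod.fst (S : Set (ℝ × ℝ))) (hpv : p.1 < v.1) (hv : UpperVertex S v)
    (hU : ∀ u, UpperVertex S u → v.1 < u.1 → cross p v u < 0) (hb : b ∈ S) (hvb : v.1 < b.1) :
    cross p v b < 0 := by
  by_contra! hb0
  set T := S.filter (fun x => v.1 < x.1)
  obtain ⟨m, hmT, hmax⟩ := T.exists_max_image (cross p v) ⟨b, mem_filter.2 ⟨hb, hvb⟩⟩
  obtain ⟨hmS, hvm⟩ := mem_filter.1 hmT
  have hm0 : 0 ≤ cross p v m := hb0.trans (hmax b (mem_filter.2 ⟨hb, hvb⟩))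
  have hmU : ¬ UpperVertex S m := fun hm => (hU m hm hvm).not_ge hm0
  simp only [UpperVertex, hmS, true_and, not_forall, not_le] at hmU
  obtain ⟨a, haS, c, hcS, ham, hmc, hbelow⟩ := hmU
  have hcm := hmax c (mem_filter.2 ⟨hcS, hvm.trans hmc⟩)
  rcases le_or_gt a.1 v.1 with hav | hva
  · -- replace `a` by `v`: `m` is still strictly below the chord `vc`, and `cross p v v = 0`
    have hbelow' : cross v c m < 0 := by
      rcases hav.lt_or_eq with hav | hav
      · exact cross_neg_of_below_of_above (ham.trans hmc) hmc.le (hvm.trans hmc) hbelow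
          (hv.2 a haS c hcS hav (hvm.trans hmc))
      · rwa [← hinj haS hv.1 hav]
    have hvv : cross p v v = 0 := by unfold cross; ring
    rcases cross_lt_or_cross_lt_of_below hpv hvm hmc hbelow' with h | h <;> linarith
  · have ham' := hmax a (mem_filter.2 ⟨haS, hva⟩)
    rcases cross_lt_or_cross_lt_of_below hpv ham hmc hbelow with h | h <;> linarith

lemma cross_get_nonpos_of_le {S : Finset (ℝ × ℝ)} {p : ℝ × ℝ} {L : List (ℝ × ℝ)}
    (hinj : Set.InjOn Prod.fst (S : Set (ℝ × ℝ))) (hleft : ∀ x ∈ S, p.1 < x.1)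
    (hsort : L.Pairwise (fun a b => a.1 < b.1)) (hmem : ∀ x, x ∈ L ↔ UpperVertex S x)
    {j i : Fin L.length} (hj : ∀ k : Fin L.length, j < k → cross p (L.get j) (L.get k) < 0)
    (hji : j ≤ i) : ∀ c ∈ S, (L.get i).1 < c.1 → cross p (L.get i) c ≤ 0 := by
  have hV : ∀ k, UpperVertex S (L.get k) := fun k => (hmem _).1 (L.get_mem k)
  have hmono : StrictMono fun k => (L.get k).1 := fun _ _ h => hsort.rel_get_of_lt h
  have hjS : ∀ c ∈ S, (L.get j).1 < c.1 → cross p (L.get j) c < 0 := by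
    refine fun c hc hjc => cross_neg_of_forall_upperVertex hinj (hleft _ (hV j).1) (hV j)
      (fun u hu hju => ?_) hc hjc
    obtain ⟨k, rfl⟩ := List.mem_iff_get.1 ((hmem u).2 hu)
    exact hj k (hmono.lt_iff_lt.1 hju)
  intro c hc hic
  rcases hji.eq_or_lt with rfl | hji
  · exact (hjS c hc hic).le
  · have hturn : cross (L.get j) (L.get i) c ≤ 0 := by
      have := (hV i).2 _ (hV j).1 c hc (hmono hji) hic
      rw [cross_swap] at this
      linarith
    exact cross_nonpos_of_right_turns (hleft _ (hV i).1).le (hmono hji) hic.le (hj i hji).le hturn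

lemma le_of_forall_cross_get_nonpos {S : Finset (ℝ × ℝ)} {p : ℝ × ℝ} {L : List (ℝ × ℝ)}
    (hgp : GenPos (insert p S)) (hleft : ∀ x ∈ S, p.1 < x.1)
    (hsort : L.Pairwise (fun a b => a.1 < b.1)) (hmem : ∀ x, x ∈ L ↔ UpperVertex S x)
    {j i : Fin L.length} (hmin : ∀ j' : Fin L.length,
      (∀ k : Fin L.length, j' < k → cross p (L.get j') (L.get k) < 0) → j ≤ j')
    (hi : ∀ c ∈ S, (L.get i).1 < c.1 → cross p (L.get i) c ≤ 0) : j ≤ i := by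
  have hS : ∀ k, L.get k ∈ S := fun k => ((hmem _).1 (L.get_mem k)).1
  refine hmin i fun m him => (hi _ (hS m) (hsort.rel_get_of_lt him)).lt_of_ne ?_
  have hne : ∀ k, p ≠ L.get k := fun k h => (h ▸ hleft _ (hS k)).false
  exact hgp.2 _ (mem_insert_self p S) _ (mem_insert_of_mem (hS i)) _ (mem_insert_of_mem (hS m))
    (hne i) (fun h => (h ▸ hsort.rel_get_of_lt him).false) (hne m)

theorem stmt8 (S : Finset (ℝ × ℝ)) (p : ℝ × ℝ) (hgp : GenPos (insert p S))
    (hleft : ∀ x ∈ S, p.1 < x.1)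
    (L : List (ℝ × ℝ)) (hsort : L.Pairwise (fun a b => a.1 < b.1))
    (hmem : ∀ x, x ∈ L ↔ UpperVertex S x)
    (j : Fin L.length)
    (hj : ∀ i : Fin L.length, j < i → cross p (L.get j) (L.get i) < 0)
    (hmin : ∀ j' : Fin L.length,
      (∀ i : Fin L.length, j' < i → cross p (L.get j') (L.get i) < 0) → j ≤ j') :
    ∀ w, UpperVertex (insert p S) w ↔
      (w = p ∨ ∃ i : Fin L.length, j ≤ i ∧ w = L.get i) := by
  intro w
  have hinj : Set.InjOn Prod.fst (S : Set (ℝ × ℝ)) := fun a ha b hb hab => by_contra fun hne =>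
    hgp.1 a (mem_insert_of_mem ha) b (mem_insert_of_mem hb) hne hab
  by_cases hwp : w = p
  · subst hwp
    simp [upperVertex_insert_of_forall_lt hleft]
  simp only [hwp, false_or]
  by_cases hwS : w ∈ S
  · rw [upperVertex_insert_iff (hleft w hwS), ← hmem, List.mem_iff_get]
    constructor
    · rintro ⟨⟨i, rfl⟩, hright⟩
      exact ⟨i, le_of_forall_cross_get_nonpos hgp hleft hsort hmem hmin hright, rfl⟩
    · rintro ⟨i, hji, rfl⟩
      exact ⟨⟨i, rfl⟩, cross_get_nonpos_of_le hinj hleft hsort hmem hj hji⟩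
  · refine ⟨fun h => (hwS ((mem_insert.1 h.1).resolve_left hwp)).elim, ?_⟩
    rintro ⟨i, -, rfl⟩
    exact (hwS ((hmem _).1 (L.get_mem i)).1).elim
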